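/- arXiv:2507.23199 — 2 statements merged into one kernel-verified Lean document; each statement's English description precedes it below -/
import Mathlib

section
/- Let u, v : [0,∞) → ℝ^J be two solutions of the Lorenz 96 equation with ‖u(t)‖ ≤ ρ and ‖v(t)‖ ≤ ρ for all t ≥ 0, where ρ = √(2J)·|F|, and let δ(t) = v(t) − u(t). Then for all t ≥ 0, (d/dt)‖Πδ(t)‖² ≤ 32·ρ²·‖δ(t)‖². -/
/-- The Lorenz 96 vector field on `ℝ^J` with external forcing `F`,
with coordinates indexed cyclically modulo `J`. -/
noncomputable def lorenz96 (J : ℕ) [NeZero J] (F : ℝ)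
    (u : EuclideanSpace ℝ (Fin J)) : EuclideanSpace ℝ (Fin J) :=
  WithLp.toLp 2 fun j => (u (j + 1) - u (j - 2)) * u (j - 1) - u j + F

/-- The orthogonal projection of `ℝ^J` that keeps the coordinates whose
(1-based) index is not divisible by 3 and zeroes out every coordinate whose
(1-based) index is divisible by 3. -/
noncomputable def lorenz96Proj (J : ℕ)
    (u : EuclideanSpace ℝ (Fin J)) : EuclideanSpace ℝ (Fin J) :=
  WithLp.toLp 2 fun j => if ((j : ℕ) + 1) % 3 = 0 then 0 else u j

/-!
With `L` the Lorenz 96 field, the derivative of `‖Π δ‖²` is `2 ⟪Π δ, Π (L v - L u)⟫`.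
Coordinatewise, `L v - L u` is a sum of four products `δ_k x_l` (with `x ∈ {u, v}`) minus the
damping term `δ_j`. By AM–GM each `δ_j δ_k x_l ≤ δ_j² / 4 + δ_k² x_l²`, so the four quarters
cancel the damping, and `|x_l| ≤ ‖x‖ ≤ ρ` together with the invariance of `∑ δ_k²` under cyclic
shifts bounds the derivative by `8 ρ² ‖δ‖²`.
-/

open scoped RealInnerProductSpace

theorem EuclideanSpace.sum_sq_comp_equiv {ι : Type*} [Fintype ι] (x : EuclideanSpace ℝ ι)
    (e : ι ≃ ι) : ∑ i, x (e i) ^ 2 = ‖x‖ ^ 2 := by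
  rw [EuclideanSpace.real_norm_sq_eq]
  exact e.sum_comp fun i => x i ^ 2

theorem EuclideanSpace.apply_sq_le_of_norm_le {ι : Type*} [Fintype ι]
    {x : EuclideanSpace ℝ ι} {ρ : ℝ} (hx : ‖x‖ ≤ ρ) (i : ι) : x i ^ 2 ≤ ρ ^ 2 := by
  rw [← sq_abs, ← Real.norm_eq_abs]
  exact pow_le_pow_left₀ (norm_nonneg _) ((PiLp.norm_apply_le x i).trans hx) 2

theorem mul_add_mul_sub_self_le {w a b c p q e ρ : ℝ} (hc : c ^ 2 ≤ ρ ^ 2) (hp : p ^ 2 ≤ ρ ^ 2)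
    (hq : q ^ 2 ≤ ρ ^ 2) :
    w * ((a - b) * c + (p - q) * e - w) ≤ ρ ^ 2 * (a ^ 2 + b ^ 2 + 2 * e ^ 2) := by
  nlinarith [sq_nonneg (w - 2 * a * c), sq_nonneg (w + 2 * b * c), sq_nonneg (w - 2 * e * p),
    sq_nonneg (w + 2 * e * q), mul_le_mul_of_nonneg_left hc (sq_nonneg a),
    mul_le_mul_of_nonneg_left hc (sq_nonneg b), mul_le_mul_of_nonneg_left hp (sq_nonneg e),
    mul_le_mul_of_nonneg_left hq (sq_nonneg e)]

section Lorenz96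

variable {J : ℕ}

noncomputable def lorenz96ProjCLM (J : ℕ) :
    EuclideanSpace ℝ (Fin J) →L[ℝ] EuclideanSpace ℝ (Fin J) :=
  LinearMap.toContinuousLinearMap
    { toFun := lorenz96Proj J
      map_add' := fun x y => by
        ext j; by_cases h : ((j : ℕ) + 1) % 3 = 0 <;> simp [lorenz96Proj, h]
      map_smul' := fun r x => by
        ext j; by_cases h : ((j : ℕ) + 1) % 3 = 0 <;> simp [lorenz96Proj, h] }

theorem hasDerivAt_norm_sq_lorenz96Proj {δ : ℝ → EuclideanSpace ℝ (Fin J)}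
    {δ' : EuclideanSpace ℝ (Fin J)} {t : ℝ} (hδ : HasDerivAt δ δ' t) :
    HasDerivAt (fun s => ‖lorenz96Proj J (δ s)‖ ^ 2)
      (2 * ⟪lorenz96Proj J (δ t), lorenz96Proj J δ'⟫) t :=
  ((lorenz96ProjCLM J).hasFDerivAt.comp_hasDerivAt t hδ).norm_sq

variable [NeZero J]

theorem lorenz96_sub_lorenz96_apply (F : ℝ) (u v : EuclideanSpace ℝ (Fin J)) (j : Fin J) :
    (lorenz96 J F v - lorenz96 J F u) j =
      ((v - u) (j + 1) - (v - u) (j - 2)) * v (j - 1)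
        + (u (j + 1) - u (j - 2)) * (v - u) (j - 1) - (v - u) j := by
  simp only [lorenz96, PiLp.sub_apply]
  ring

theorem mul_lorenz96_sub_lorenz96_apply_le (F : ℝ) {u v : EuclideanSpace ℝ (Fin J)} {ρ : ℝ}
    (hu : ‖u‖ ≤ ρ) (hv : ‖v‖ ≤ ρ) (j : Fin J) :
    (v - u) j * (lorenz96 J F v - lorenz96 J F u) j ≤
      ρ ^ 2 * ((v - u) (j + 1) ^ 2 + (v - u) (j - 2) ^ 2 + 2 * (v - u) (j - 1) ^ 2) := by
  rw [lorenz96_sub_lorenz96_apply]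
  exact mul_add_mul_sub_self_le (EuclideanSpace.apply_sq_le_of_norm_le hv _)
    (EuclideanSpace.apply_sq_le_of_norm_le hu _) (EuclideanSpace.apply_sq_le_of_norm_le hu _)

theorem inner_lorenz96Proj_sub_le (F : ℝ) {u v : EuclideanSpace ℝ (Fin J)} {ρ : ℝ}
    (hu : ‖u‖ ≤ ρ) (hv : ‖v‖ ≤ ρ) :
    ⟪lorenz96Proj J (v - u), lorenz96Proj J (lorenz96 J F v - lorenz96 J F u)⟫ ≤
      4 * ρ ^ 2 * ‖v - u‖ ^ 2 := by
  set w := v - u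
  have hcoord (j : Fin J) :
      lorenz96Proj J w j * lorenz96Proj J (lorenz96 J F v - lorenz96 J F u) j ≤
        ρ ^ 2 * (w (j + 1) ^ 2 + w (j - 2) ^ 2 + 2 * w (j - 1) ^ 2) := by
    simp only [lorenz96Proj, PiLp.toLp_apply]
    split_ifs
    · rw [mul_zero]; positivity
    · exact mul_lorenz96_sub_lorenz96_apply_le F hu hv j
  have h₁ : ∑ j, w (j + 1) ^ 2 = ‖w‖ ^ 2 := w.sum_sq_comp_equiv (Equiv.addRight 1)
  have h₂ : ∑ j, w (j - 2) ^ 2 = ‖w‖ ^ 2 := w.sum_sq_comp_equiv (Equiv.subRight 2)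
  have h₃ : ∑ j, w (j - 1) ^ 2 = ‖w‖ ^ 2 := w.sum_sq_comp_equiv (Equiv.subRight 1)
  calc ⟪lorenz96Proj J w, lorenz96Proj J (lorenz96 J F v - lorenz96 J F u)⟫
      ≤ ∑ j, ρ ^ 2 * (w (j + 1) ^ 2 + w (j - 2) ^ 2 + 2 * w (j - 1) ^ 2) := by
        rw [PiLp.inner_apply]
        refine Finset.sum_le_sum fun j _ => ?_
        rw [real_inner_eq_re_inner, RCLike.inner_apply]
        simpa [mul_comm] using hcoord j
    _ = 4 * ρ ^ 2 * ‖w‖ ^ 2 := by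
        simp only [← Finset.mul_sum, Finset.sum_add_distrib, h₁, h₂, h₃]
        ring

end Lorenz96

theorem lorenz96_deriv_proj_err_sq_le_general (J : ℕ) [NeZero J] (F : ℝ)
    (u v : ℝ → EuclideanSpace ℝ (Fin J))
    (hu : ∀ t : ℝ, 0 ≤ t → HasDerivAt u (lorenz96 J F (u t)) t)
    (hv : ∀ t : ℝ, 0 ≤ t → HasDerivAt v (lorenz96 J F (v t)) t)
    (hubd : ∀ t : ℝ, 0 ≤ t → ‖u t‖ ≤ Real.sqrt (2 * J) * |F|)
    (hvbd : ∀ t : ℝ, 0 ≤ t → ‖v t‖ ≤ Real.sqrt (2 * J) * |F|) :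
    ∀ t : ℝ, 0 ≤ t →
      deriv (fun s => ‖lorenz96Proj J (v s - u s)‖ ^ 2) t
        ≤ 32 * (Real.sqrt (2 * J) * |F|) ^ 2 * ‖v t - u t‖ ^ 2 := by
  intro t ht
  rw [(hasDerivAt_norm_sq_lorenz96Proj ((hv t ht).fun_sub (hu t ht))).deriv]
  have hinner := inner_lorenz96Proj_sub_le F (hubd t ht) (hvbd t ht)
  have hnonneg : 0 ≤ (Real.sqrt (2 * J) * |F|) ^ 2 * ‖v t - u t‖ ^ 2 := by positivity
  linarith

theorem lorenz96_deriv_proj_err_sq_le (J J' : ℕ) [NeZero J]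
    (hJ3 : J = 3 * J') (hJ4 : 4 ≤ J) (F : ℝ)
    (u v : ℝ → EuclideanSpace ℝ (Fin J))
    (hu : ∀ t : ℝ, 0 ≤ t → HasDerivAt u (lorenz96 J F (u t)) t)
    (hv : ∀ t : ℝ, 0 ≤ t → HasDerivAt v (lorenz96 J F (v t)) t)
    (hubd : ∀ t : ℝ, 0 ≤ t → ‖u t‖ ≤ Real.sqrt (2 * J) * |F|)
    (hvbd : ∀ t : ℝ, 0 ≤ t → ‖v t‖ ≤ Real.sqrt (2 * J) * |F|) :
    ∀ t : ℝ, 0 ≤ t →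
      deriv (fun s => ‖lorenz96Proj J (v s - u s)‖ ^ 2) t
        ≤ 32 * (Real.sqrt (2 * J) * |F|) ^ 2 * ‖v t - u t‖ ^ 2 :=
  lorenz96_deriv_proj_err_sq_le_general J F u v hu hv hubd hvbd
end

section
/- Let u, v : [0,∞) → ℝ^J be two solutions of the Lorenz 96 equation with ‖u(t)‖ ≤ ρ for all t ≥ 0, where ρ = √(2J)·|F|, let δ(t) = v(t) − u(t), and assume c > 0 is such that ⟨2B(a,b) + B(b,b), b⟩ ≤ c·‖a‖·‖b‖·‖Πb‖ for all a, b ∈ ℝ^J. Then for all t ≥ 0, (d/dt)‖δ(t)‖² + 2·‖δ(t)‖² ≤ 2cρ·‖δ(t)‖·‖Πδ(t)‖. -/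
/-- The symmetric bilinear map of the Lorenz 96 model, with coordinates
indexed cyclically modulo `J`. -/
noncomputable def lorenz96B (J : ℕ) [NeZero J]
    (u v : EuclideanSpace ℝ (Fin J)) : EuclideanSpace ℝ (Fin J) :=
  WithLp.toLp 2 fun j => (1 / 2) * (v (j - 1) * u (j + 1) + u (j - 1) * v (j + 1)
    - v (j - 2) * u (j - 1) - u (j - 2) * v (j - 1))

section

variable {J : ℕ} [NeZero J]

lemma lorenz96_sub_lorenz96 (F : ℝ) (a b : EuclideanSpace ℝ (Fin J)) :
    lorenz96 J F b - lorenz96 J F a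
      = 2 • lorenz96B J a (b - a) + lorenz96B J (b - a) (b - a) - (b - a) := by
  ext j
  simp only [lorenz96, lorenz96B, PiLp.sub_apply, PiLp.add_apply, PiLp.smul_apply]
  ring

lemma inner_sub_lorenz96_sub_lorenz96 (F : ℝ) (a b : EuclideanSpace ℝ (Fin J)) :
    inner (𝕜 := ℝ) (b - a) (lorenz96 J F b - lorenz96 J F a)
      = inner (𝕜 := ℝ) (2 • lorenz96B J a (b - a) + lorenz96B J (b - a) (b - a)) (b - a)
        - ‖b - a‖ ^ 2 := by
  rw [real_inner_comm, lorenz96_sub_lorenz96, inner_sub_left, real_inner_self_eq_norm_sq]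

lemma hasDerivAt_norm_sub_sq_lorenz96 {F t : ℝ} {u v : ℝ → EuclideanSpace ℝ (Fin J)}
    (hu : HasDerivAt u (lorenz96 J F (u t)) t) (hv : HasDerivAt v (lorenz96 J F (v t)) t) :
    HasDerivAt (fun s => ‖v s - u s‖ ^ 2)
      (2 * inner (𝕜 := ℝ) (2 • lorenz96B J (u t) (v t - u t)
          + lorenz96B J (v t - u t) (v t - u t)) (v t - u t)
        - 2 * ‖v t - u t‖ ^ 2) t := by
  refine (HasDerivAt.norm_sq (f := fun s => v s - u s) (hv.sub hu)).congr_deriv ?_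
  rw [inner_sub_lorenz96_sub_lorenz96]
  ring

end

theorem lorenz96_deriv_err_sq_le_general (J : ℕ) [NeZero J]
    (F : ℝ) (c : ℝ) (hc : 0 < c)
    (hB : ∀ a b : EuclideanSpace ℝ (Fin J),
      inner (𝕜 := ℝ) (2 • lorenz96B J a b + lorenz96B J b b) b
        ≤ c * ‖a‖ * ‖b‖ * ‖lorenz96Proj J b‖)
    (u v : ℝ → EuclideanSpace ℝ (Fin J))
    (hu : ∀ t : ℝ, 0 ≤ t → HasDerivAt u (lorenz96 J F (u t)) t)
    (hv : ∀ t : ℝ, 0 ≤ t → HasDerivAt v (lorenz96 J F (v t)) t)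
    (hubd : ∀ t : ℝ, 0 ≤ t → ‖u t‖ ≤ Real.sqrt (2 * J) * |F|) :
    ∀ t : ℝ, 0 ≤ t →
      deriv (fun s => ‖v s - u s‖ ^ 2) t + 2 * ‖v t - u t‖ ^ 2
        ≤ 2 * c * (Real.sqrt (2 * J) * |F|) * ‖v t - u t‖
            * ‖lorenz96Proj J (v t - u t)‖ := by
  intro t ht
  rw [(hasDerivAt_norm_sub_sq_lorenz96 (hu t ht) (hv t ht)).deriv]
  calc _ = 2 * inner (𝕜 := ℝ) (2 • lorenz96B J (u t) (v t - u t)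
              + lorenz96B J (v t - u t) (v t - u t)) (v t - u t) := by ring
    _ ≤ 2 * (c * ‖u t‖ * ‖v t - u t‖ * ‖lorenz96Proj J (v t - u t)‖) := by
        gcongr; exact hB _ _
    _ = 2 * c * ‖u t‖ * ‖v t - u t‖ * ‖lorenz96Proj J (v t - u t)‖ := by ring
    _ ≤ _ := by gcongr; exact hubd t ht

theorem lorenz96_deriv_err_sq_le (J J' : ℕ) [NeZero J]
    (hJ3 : J = 3 * J') (hJ4 : 4 ≤ J) (F : ℝ) (c : ℝ) (hc : 0 < c)
    (hB : ∀ a b : EuclideanSpace ℝ (Fin J),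
      inner (𝕜 := ℝ) (2 • lorenz96B J a b + lorenz96B J b b) b
        ≤ c * ‖a‖ * ‖b‖ * ‖lorenz96Proj J b‖)
    (u v : ℝ → EuclideanSpace ℝ (Fin J))
    (hu : ∀ t : ℝ, 0 ≤ t → HasDerivAt u (lorenz96 J F (u t)) t)
    (hv : ∀ t : ℝ, 0 ≤ t → HasDerivAt v (lorenz96 J F (v t)) t)
    (hubd : ∀ t : ℝ, 0 ≤ t → ‖u t‖ ≤ Real.sqrt (2 * J) * |F|) :
    ∀ t : ℝ, 0 ≤ t →
      deriv (fun s => ‖v s - u s‖ ^ 2) t + 2 * ‖v t - u t‖ ^ 2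
        ≤ 2 * c * (Real.sqrt (2 * J) * |F|) * ‖v t - u t‖
            * ‖lorenz96Proj J (v t - u t)‖ :=
  lorenz96_deriv_err_sq_le_general J F c hc hB u v hu hv hubd
end
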